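/- For all x > 0 and y > 0 there exists a unique B > 0 with φ←(B) + xy·φ←(B/(xy)) = φ←(x) + x·φ←(y). Moreover, if x > 1 and y > 1 (two overtaking backward shocks), then this B satisfies 1 < B < xy; that is, the interaction of two backward shocks always produces an outgoing backward shock and an outgoing forward rarefaction. -/

import Mathlib

open Real Set Filter Topology

/-- κ = √γ / α with α = (γ-1)/2. -/
noncomputable def kappa (γ : ℝ) : ℝ := Real.sqrt γ / ((γ - 1) / 2)

/-- The shock branch x ↦ √((1 - x^{-1/α})(x^{γ/α} - 1)), α = (γ-1)/2. -/
noncomputable def shockPart (γ : ℝ) (x : ℝ) : ℝ :=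
  Real.sqrt ((1 - x ^ (-(1 : ℝ) / ((γ - 1) / 2))) * (x ^ (γ / ((γ - 1) / 2)) - 1))

/-- Backward auxiliary function φ← : rarefaction branch κ(x-1) for x ≤ 1,
    shock branch for x ≥ 1 (they agree, with value 0, at x = 1). -/
noncomputable def phiB (γ : ℝ) (x : ℝ) : ℝ :=
  if x ≤ 1 then kappa γ * (x - 1) else shockPart γ x

/-- Forward auxiliary function φ→ : shock branch -√(...) for x ≤ 1,
    rarefaction branch κ(x-1) for x ≥ 1 (they agree, with value 0, at x = 1). -/
noncomputable def phiF (γ : ℝ) (x : ℝ) : ℝ :=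
  if x < 1 then -shockPart γ x else kappa γ * (x - 1)


/-!
Substituting `x = exp ((γ - 1) s)` turns the shock branch into `2 e^{αs} √(sinh s · sinh γs)`.
In this variable one checks that the shock branch is strictly convex on `[1, ∞)` and lies above
the line `κ (x - 1)`, which continues the rarefaction branch. Hence `φ←` is continuous and strictly
increasing, and the left-hand side of the interaction equation is continuous, strictly increasing
in `B` and at least `κ (2B - 1 - xy)`, while the right-hand side is at least `κ (xy - 1)`: the
solution exists and is unique. For two shocks the left-hand side is negative at `B = 1`, while the
right-hand side is not; at `B = xy` it is the shock branch at `xy`, which exceeds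
`φ←(x) + x φ←(y)` because the secant slopes of a convex function vanishing at `1` increase.
-/

namespace Real

lemma convexOn_sinh : ConvexOn ℝ (Ici 0) sinh := by
  refine MonotoneOn.convexOn_of_deriv (convex_Ici 0) continuous_sinh.continuousOn
    differentiable_sinh.differentiableOn ?_
  rw [deriv_sinh, interior_Ici]
  exact cosh_strictMonoOn.monotoneOn.mono Ioi_subset_Ici_self

lemma mul_sinh_le_mul_sinh {p q t : ℝ} (hp : 0 < p) (hpq : p ≤ q) (ht : 0 ≤ t) :
    q * sinh (p * t) ≤ p * sinh (q * t) := by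
  have hq : 0 < q := hp.trans_le hpq
  have h := convexOn_sinh.2 (mem_Ici.2 le_rfl) (mem_Ici.2 (by positivity : 0 ≤ q * t))
    (sub_nonneg.2 ((div_le_one hq).2 hpq)) (div_pos hp hq).le (sub_add_cancel 1 (p / q))
  simp only [smul_eq_mul, mul_zero, sinh_zero, zero_add] at h
  rw [show p / q * (q * t) = p * t by field_simp] at h
  calc q * sinh (p * t) ≤ q * (p / q * sinh (q * t)) := by gcongr
    _ = p * sinh (q * t) := by field_simp

lemma cosh_sub_one_eq (u : ℝ) : cosh u - 1 = 2 * sinh (u / 2) ^ 2 := by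
  have h := cosh_two_mul (u / 2)
  rw [mul_div_cancel₀ u two_ne_zero] at h
  linarith [cosh_sq (u / 2)]

lemma sq_mul_cosh_sub_one_le {p q t : ℝ} (hp : 0 < p) (hpq : p ≤ q) (ht : 0 ≤ t) :
    q ^ 2 * (cosh (p * t) - 1) ≤ p ^ 2 * (cosh (q * t) - 1) := by
  have h := mul_sinh_le_mul_sinh hp hpq (by linarith : 0 ≤ t / 2)
  have h0 : 0 ≤ q * sinh (p * (t / 2)) :=
    mul_nonneg (hp.trans_le hpq).le (sinh_nonneg_iff.2 (mul_nonneg hp.le (by linarith)))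
  rw [cosh_sub_one_eq, cosh_sub_one_eq, mul_div_assoc, mul_div_assoc]
  nlinarith [pow_le_pow_left₀ h0 h 2]

lemma exp_two_mul_sub_one (u : ℝ) : exp (2 * u) - 1 = 2 * exp u * sinh u := by
  rw [sinh_eq, two_mul, exp_add, exp_neg]
  field_simp

lemma sinh_lt_mul_exp {x : ℝ} (hx : 0 < x) : sinh x < x * exp x := by
  have h := add_one_lt_exp (by linarith : -2 * x ≠ 0)
  have e : exp (-x) = exp x * exp (-2 * x) := by rw [← exp_add]; ring_nf
  rw [sinh_eq, e]
  nlinarith [exp_pos x]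

lemma sq_add_sq_lt_two_mul_mul_cosh {a b c : ℝ} (ha : 0 < a) (hab : a ≤ b) (hc : 0 < c)
    (hba : b < a * exp c) : a ^ 2 + b ^ 2 < 2 * a * b * cosh c := by
  have hE : 1 < exp c := one_lt_exp_iff.2 hc
  have key : 0 < (a * exp c - b) * (b * exp c - a) := mul_pos (by linarith) (by nlinarith)
  have e : 2 * a * b * cosh c - (a ^ 2 + b ^ 2) = (a * exp c - b) * (b * exp c - a) / exp c := by
    rw [cosh_eq, exp_neg]
    field_simp
    ring
  have : 0 < 2 * a * b * cosh c - (a ^ 2 + b ^ 2) := by rw [e]; positivity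
  linarith

end Real

/-- The secant slope of `f` on `[x, x y]` exceeds the one on `[1, y]`. -/
lemma StrictConvexOn.add_mul_lt_apply_mul {f : ℝ → ℝ} (hf : StrictConvexOn ℝ (Ici 1) f)
    (hf1 : f 1 = 0) {x y : ℝ} (hx : 1 < x) (hy : 1 < y) : f x + x * f y < f (x * y) := by
  have hxy : y < x * y := lt_mul_of_one_lt_left (by linarith) hx
  have hx' : x < x * y := lt_mul_of_one_lt_right (by linarith) hy
  have h1 := hf.secant_strict_mono (mem_Ici.2 le_rfl) (mem_Ici.2 hy.le)
    (mem_Ici.2 (hy.trans hxy).le) hy.ne' (hy.trans hxy).ne' hxy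
  have h2 := hf.secant_strict_mono (mem_Ici.2 (hy.trans hxy).le) (mem_Ici.2 le_rfl)
    (mem_Ici.2 hx.le) (hy.trans hxy).ne (hx'.ne) hx
  rw [← neg_div_neg_eq (f 1 - _), ← neg_div_neg_eq (f x - _), neg_sub, neg_sub, neg_sub,
    neg_sub] at h2
  simp only [hf1, sub_zero] at h1 h2
  have h := h1.trans h2
  rw [div_lt_div_iff₀ (by linarith) (by linarith)] at h
  nlinarith

noncomputable section

variable {γ s : ℝ}

def sinhProd (γ s : ℝ) : ℝ := sinh s * sinh (γ * s)

def sinhProdDeriv (γ s : ℝ) : ℝ := cosh s * sinh (γ * s) + γ * (sinh s * cosh (γ * s))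

def sinhProdDeriv2 (γ s : ℝ) : ℝ :=
  (1 + γ ^ 2) * sinhProd γ s + 2 * γ * (cosh s * cosh (γ * s))

lemma sinhProd_pos (hγ : 0 < γ) (hs : 0 < s) : 0 < sinhProd γ s :=
  mul_pos (sinh_pos_iff.2 hs) (sinh_pos_iff.2 (mul_pos hγ hs))

lemma hasDerivAt_sinhProd (γ s : ℝ) : HasDerivAt (sinhProd γ) (sinhProdDeriv γ s) s := by
  have hγs : HasDerivAt (γ * ·) γ s := by simpa using (hasDerivAt_id s).const_mul γ
  exact ((hasDerivAt_sinh s).mul hγs.sinh).congr_deriv (by rw [sinhProdDeriv]; ring)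

lemma hasDerivAt_sinhProdDeriv (γ s : ℝ) :
    HasDerivAt (sinhProdDeriv γ) (sinhProdDeriv2 γ s) s := by
  have hγs : HasDerivAt (γ * ·) γ s := by simpa using (hasDerivAt_id s).const_mul γ
  exact (((hasDerivAt_cosh s).mul hγs.sinh).add
    (((hasDerivAt_sinh s).mul hγs.cosh).const_mul γ)).congr_deriv
    (by rw [sinhProdDeriv2, sinhProd]; ring)

lemma sq_mul_sinhProd_sq_add_sinhProdDeriv_sq_lt (hγ : 1 ≤ γ) (hs : 0 < s) :
    (γ - 1) ^ 2 * sinhProd γ s ^ 2 + sinhProdDeriv γ s ^ 2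
      < 2 * sinhProdDeriv2 γ s * sinhProd γ s := by
  have hsinh : 0 < sinh s := sinh_pos_iff.2 hs
  have hle : γ * sinh s ≤ sinh (γ * s) := by
    simpa using mul_sinh_le_mul_sinh one_pos hγ hs.le
  have hlt : sinh (γ * s) < γ * sinh s * exp ((γ + 1) * s) :=
    calc sinh (γ * s) < γ * s * exp (γ * s) := sinh_lt_mul_exp (by positivity)
      _ ≤ γ * sinh s * exp (γ * s) := by gcongr; exact self_le_sinh_iff.2 hs.le
      _ < γ * sinh s * exp ((γ + 1) * s) := by gcongr; nlinarith
  -- with `a = γ sinh s ≤ b = sinh (γ s)`, the claim expands to `a² + b² < 2ab cosh ((γ + 1) s)`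
  have h := sq_add_sq_lt_two_mul_mul_cosh (by positivity) hle (by positivity) hlt
  rw [add_mul, one_mul, cosh_add] at h
  have c1 := cosh_sq s
  have c2 := cosh_sq (γ * s)
  simp only [sinhProd, sinhProdDeriv, sinhProdDeriv2]
  nlinarith

def shockParam (γ s : ℝ) : ℝ := 2 * exp ((γ - 1) / 2 * s) * √(sinhProd γ s)

def shockSlope (γ s : ℝ) : ℝ :=
  exp (-((γ - 1) / 2 * s)) *
    ((γ - 1) / 2 * √(sinhProd γ s) + sinhProdDeriv γ s / (2 * √(sinhProd γ s)))

lemma continuous_shockParam (γ : ℝ) : Continuous (shockParam γ) := by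
  unfold shockParam sinhProd
  fun_prop

lemma hasDerivAt_sqrt_sinhProd (hγ : 0 < γ) (hs : 0 < s) :
    HasDerivAt (fun t => √(sinhProd γ t)) (sinhProdDeriv γ s / (2 * √(sinhProd γ s))) s :=
  (hasDerivAt_sinhProd γ s).sqrt (sinhProd_pos hγ hs).ne'

lemma hasDerivAt_shockParam (hγ : 0 < γ) (hs : 0 < s) :
    HasDerivAt (shockParam γ) (2 * exp ((γ - 1) * s) * shockSlope γ s) s := by
  have hexp : HasDerivAt (fun t => exp ((γ - 1) / 2 * t))
      (exp ((γ - 1) / 2 * s) * ((γ - 1) / 2)) s := by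
    simpa using ((hasDerivAt_id s).const_mul ((γ - 1) / 2)).exp
  refine ((hexp.const_mul 2).mul (hasDerivAt_sqrt_sinhProd hγ hs)).congr_deriv ?_
  have e : exp ((γ - 1) * s) * exp (-((γ - 1) / 2 * s)) = exp ((γ - 1) / 2 * s) := by
    rw [← exp_add]; ring_nf
  rw [shockSlope, ← e]
  ring

lemma hasDerivAt_shockSlope (hγ : 0 < γ) (hs : 0 < s) :
    HasDerivAt (shockSlope γ)
      (exp (-((γ - 1) / 2 * s)) *
        ((2 * sinhProdDeriv2 γ s * sinhProd γ s - sinhProdDeriv γ s ^ 2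
            - (γ - 1) ^ 2 * sinhProd γ s ^ 2) / (4 * sinhProd γ s * √(sinhProd γ s)))) s := by
  have hP := sinhProd_pos hγ hs
  have hQ : 0 < √(sinhProd γ s) := sqrt_pos.2 hP
  have hQsq : √(sinhProd γ s) ^ 2 = sinhProd γ s := sq_sqrt hP.le
  have hexp : HasDerivAt (fun t => exp (-((γ - 1) / 2 * t)))
      (exp (-((γ - 1) / 2 * s)) * (-((γ - 1) / 2))) s := by
    simpa using ((hasDerivAt_id s).const_mul ((γ - 1) / 2)).neg.exp
  have hQ' := hasDerivAt_sqrt_sinhProd hγ hs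
  refine (hexp.mul ((hQ'.const_mul ((γ - 1) / 2)).add
    ((hasDerivAt_sinhProdDeriv γ s).div (hQ'.const_mul 2) (by positivity)))).congr_deriv ?_
  simp only [Pi.add_apply, Pi.div_apply]
  set Q := √(sinhProd γ s)
  rw [← hQsq]
  field_simp
  ring

lemma strictMonoOn_shockSlope (hγ : 1 < γ) : StrictMonoOn (shockSlope γ) (Ioi 0) := by
  refine strictMonoOn_of_deriv_pos (convex_Ioi 0)
    (fun s hs => (hasDerivAt_shockSlope (by linarith) hs).continuousAt.continuousWithinAt)
    (fun s hs => ?_)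
  rw [interior_Ioi] at hs
  have hP := sinhProd_pos (by linarith) hs
  have hnum := sq_mul_sinhProd_sq_add_sinhProdDeriv_sq_lt hγ.le hs
  rw [(hasDerivAt_shockSlope (by linarith) hs).deriv]
  exact mul_pos (exp_pos _) (div_pos (by linarith) (by positivity))

lemma shockPart_exp_mul (hγ : γ ≠ 1) (s : ℝ) :
    shockPart γ (exp ((γ - 1) * s)) = shockParam γ s := by
  have hγ' : γ - 1 ≠ 0 := sub_ne_zero.2 hγ
  have e1 : exp ((γ - 1) * s) ^ (-(1 : ℝ) / ((γ - 1) / 2)) = exp (2 * -s) := by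
    rw [← exp_mul]; congr 1; field_simp
  have e2 : exp ((γ - 1) * s) ^ (γ / ((γ - 1) / 2)) = exp (2 * (γ * s)) := by
    rw [← exp_mul]; congr 1; field_simp
  have e3 : exp (-s) * exp (γ * s) = exp ((γ - 1) / 2 * s) ^ 2 := by
    rw [← exp_add, sq, ← exp_add]; ring_nf
  have hprod : (1 - exp (2 * -s)) * (exp (2 * (γ * s)) - 1)
      = (2 * exp ((γ - 1) / 2 * s)) ^ 2 * sinhProd γ s := by
    rw [← neg_sub, exp_two_mul_sub_one, exp_two_mul_sub_one, sinhProd, sinh_neg,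
      mul_pow, ← e3]
    ring
  rw [shockPart, e1, e2, hprod, sqrt_mul (by positivity), sqrt_sq (by positivity), shockParam]

lemma kappa_mul_le_shockParam (hγ : 1 < γ) (hs : 0 ≤ s) :
    kappa γ * (exp ((γ - 1) * s) - 1) ≤ shockParam γ s := by
  have hα : 0 < (γ - 1) / 2 := by linarith
  have hsinh : 0 ≤ sinh ((γ - 1) / 2 * s) := sinh_nonneg_iff.2 (by positivity)
  -- `(cosh (c s) - 1) / c ^ 2` increases in `c`; compare `c = γ - 1` with `c = γ + 1`
  have hkey : γ * sinh ((γ - 1) / 2 * s) ^ 2 ≤ ((γ - 1) / 2) ^ 2 * sinhProd γ s := by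
    have h := sq_mul_cosh_sub_one_le (by linarith : 0 < γ - 1) (by linarith : γ - 1 ≤ γ + 1) hs
    have c := cosh_sub_one_eq ((γ - 1) * s)
    rw [show (γ - 1) * s / 2 = (γ - 1) / 2 * s by ring] at c
    have p1 := cosh_add (γ * s) s
    have p2 := cosh_sub (γ * s) s
    rw [show γ * s + s = (γ + 1) * s by ring] at p1
    rw [show γ * s - s = (γ - 1) * s by ring] at p2
    rw [sinhProd]
    nlinarith
  have hk : kappa γ * sinh ((γ - 1) / 2 * s) ≤ √(sinhProd γ s) := by
    refine le_sqrt_of_sq_le ?_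
    rw [kappa, mul_pow, div_pow, sq_sqrt (by linarith), div_mul_eq_mul_div,
      div_le_iff₀ (by positivity)]
    linarith
  rw [show (γ - 1) * s = 2 * ((γ - 1) / 2 * s) by ring, exp_two_mul_sub_one, shockParam]
  nlinarith [exp_pos ((γ - 1) / 2 * s)]

lemma shockPart_eq_shockParam_log (hγ : γ ≠ 1) {x : ℝ} (hx : 0 < x) :
    shockPart γ x = shockParam γ (log x / (γ - 1)) := by
  rw [← shockPart_exp_mul hγ, mul_div_cancel₀ _ (sub_ne_zero.2 hγ), exp_log hx]

lemma continuousOn_shockPart (hγ : γ ≠ 1) : ContinuousOn (shockPart γ) (Ioi 0) := by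
  refine ContinuousOn.congr ?_ fun x hx => shockPart_eq_shockParam_log hγ hx
  exact (continuous_shockParam γ).comp_continuousOn
    ((continuousOn_log.mono fun x hx => ne_of_gt hx).div_const _)

lemma hasDerivAt_shockPart (hγ : 1 < γ) {x : ℝ} (hx : 1 < x) :
    HasDerivAt (shockPart γ) (shockSlope γ (log x / (γ - 1)) / ((γ - 1) / 2)) x := by
  have hγ' : γ - 1 ≠ 0 := by linarith
  have hx0 : 0 < x := by linarith
  have hs : 0 < log x / (γ - 1) := div_pos (log_pos hx) (by linarith)
  have hlog : HasDerivAt (fun y => log y / (γ - 1)) (x⁻¹ / (γ - 1)) x :=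
    (hasDerivAt_log hx0.ne').div_const _
  have h := (hasDerivAt_shockParam (γ := γ) (by linarith) hs).comp x hlog
  rw [mul_div_cancel₀ _ hγ', exp_log hx0] at h
  refine (h.congr_of_eventuallyEq ?_).congr_deriv ?_
  · filter_upwards [Ioi_mem_nhds hx0] with y hy using shockPart_eq_shockParam_log hγ.ne' hy
  · field_simp

lemma strictConvexOn_shockPart (hγ : 1 < γ) : StrictConvexOn ℝ (Ici 1) (shockPart γ) := by
  refine StrictMonoOn.strictConvexOn_of_deriv (convex_Ici 1)
    ((continuousOn_shockPart hγ.ne').mono fun x hx => mem_Ioi.2 (zero_lt_one.trans_le hx)) ?_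
  rw [interior_Ici]
  intro x hx y hy hxy
  have hα : 0 < (γ - 1) / 2 := by linarith
  rw [(hasDerivAt_shockPart hγ hx).deriv, (hasDerivAt_shockPart hγ hy).deriv]
  refine div_lt_div_of_pos_right (strictMonoOn_shockSlope hγ ?_ ?_ ?_) hα
  · exact div_pos (log_pos hx) (by linarith)
  · exact div_pos (log_pos hy) (by linarith)
  · exact div_lt_div_of_pos_right (log_lt_log (zero_lt_one.trans hx) hxy) (by linarith)

lemma shockPart_one (γ : ℝ) : shockPart γ 1 = 0 := by
  simp [shockPart]

lemma shockPart_nonneg (γ x : ℝ) : 0 ≤ shockPart γ x := sqrt_nonneg _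

lemma kappa_pos (hγ : 1 < γ) : 0 < kappa γ :=
  div_pos (sqrt_pos.2 (by linarith)) (by linarith)

lemma kappa_mul_le_shockPart (hγ : 1 < γ) {x : ℝ} (hx : 1 ≤ x) :
    kappa γ * (x - 1) ≤ shockPart γ x := by
  have hx0 : 0 < x := by linarith
  have h := kappa_mul_le_shockParam hγ (div_nonneg (log_nonneg hx) (by linarith : 0 ≤ γ - 1))
  rwa [mul_div_cancel₀ _ (by linarith : γ - 1 ≠ 0), exp_log hx0,
    ← shockPart_eq_shockParam_log hγ.ne' hx0] at h

lemma shockPart_pos (hγ : 1 < γ) {x : ℝ} (hx : 1 < x) : 0 < shockPart γ x :=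
  (mul_pos (kappa_pos hγ) (sub_pos.2 hx)).trans_le (kappa_mul_le_shockPart hγ hx.le)

lemma strictMonoOn_shockPart (hγ : 1 < γ) : StrictMonoOn (shockPart γ) (Ici 1) := by
  intro u hu w hw huw
  rcases (mem_Ici.1 hu).eq_or_lt with rfl | hu1
  · rw [shockPart_one]; exact shockPart_pos hγ huw
  · refine (strictConvexOn_shockPart hγ).convexOn.lt_right_of_left_lt (mem_Ici.2 le_rfl) hw ?_ ?_
    · rw [openSegment_eq_Ioo (hu1.trans huw)]; exact ⟨hu1, huw⟩
    · rw [shockPart_one]; exact shockPart_pos hγ hu1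

lemma phiB_of_le {x : ℝ} (hx : x ≤ 1) : phiB γ x = kappa γ * (x - 1) := if_pos hx

lemma phiB_of_one_lt {x : ℝ} (hx : 1 < x) : phiB γ x = shockPart γ x := if_neg hx.not_ge

lemma phiB_one : phiB γ 1 = 0 := by
  rw [phiB_of_le le_rfl, sub_self, mul_zero]

lemma kappa_mul_le_phiB (hγ : 1 < γ) (x : ℝ) : kappa γ * (x - 1) ≤ phiB γ x := by
  rcases le_or_gt x 1 with hx | hx
  · exact (phiB_of_le hx).ge
  · exact (phiB_of_one_lt hx).symm ▸ kappa_mul_le_shockPart hγ hx.le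

lemma strictMono_phiB (hγ : 1 < γ) : StrictMono (phiB γ) := by
  intro u w huw
  rcases le_or_gt w 1 with hw | hw
  · rw [phiB_of_le (huw.le.trans hw), phiB_of_le hw]
    exact mul_lt_mul_of_pos_left (by linarith) (kappa_pos hγ)
  rw [phiB_of_one_lt hw]
  rcases le_or_gt u 1 with hu | hu
  · rw [phiB_of_le hu]
    exact (mul_nonpos_of_nonneg_of_nonpos (kappa_pos hγ).le (by linarith)).trans_lt
      (shockPart_pos hγ hw)
  · rw [phiB_of_one_lt hu]
    exact strictMonoOn_shockPart hγ (mem_Ici.2 hu.le) (mem_Ici.2 hw.le) huw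

lemma continuous_phiB (hγ : 1 < γ) : Continuous (phiB γ) := by
  have h : phiB γ = fun x => kappa γ * (min x 1 - 1) + shockPart γ (max x 1) := by
    ext x
    rcases le_or_gt x 1 with hx | hx
    · rw [phiB_of_le hx, min_eq_left hx, max_eq_right hx, shockPart_one, add_zero]
    · rw [phiB_of_one_lt hx, min_eq_right hx.le, max_eq_left hx.le, sub_self, mul_zero, zero_add]
  rw [h]
  refine (continuous_const.mul ((continuous_id.min continuous_const).sub continuous_const)).add ?_
  exact (continuousOn_shockPart hγ.ne').comp_continuous (continuous_id.max continuous_const)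
    fun x => mem_Ioi.2 (zero_lt_one.trans_le (le_max_right x 1))

/-- The left-hand side of the interaction equation as a function of `B`, with `p = x y`. -/
def outgoingPhi (γ p B : ℝ) : ℝ := phiB γ B + p * phiB γ (B / p)

variable {p : ℝ}

lemma strictMono_outgoingPhi (hγ : 1 < γ) (hp : 0 < p) : StrictMono (outgoingPhi γ p) :=
  (strictMono_phiB hγ).add
    (((strictMono_phiB hγ).comp (strictMono_div_right_of_pos hp)).const_mul hp)

lemma continuous_outgoingPhi (hγ : 1 < γ) (p : ℝ) : Continuous (outgoingPhi γ p) :=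
  (continuous_phiB hγ).add
    (continuous_const.mul ((continuous_phiB hγ).comp (continuous_id.div_const p)))

lemma kappa_mul_le_outgoingPhi (hγ : 1 < γ) (hp : 0 < p) (B : ℝ) :
    kappa γ * (2 * B - 1 - p) ≤ outgoingPhi γ p B := by
  have h := mul_le_mul_of_nonneg_left (kappa_mul_le_phiB hγ (B / p)) hp.le
  rw [show p * (kappa γ * (B / p - 1)) = kappa γ * (B - p) by field_simp] at h
  rw [outgoingPhi]
  linarith [kappa_mul_le_phiB hγ B]

lemma outgoingPhi_of_le (hp : 0 < p) {B : ℝ} (hB : B ≤ 1) (hBp : B ≤ p) :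
    outgoingPhi γ p B = kappa γ * (2 * B - 1 - p) := by
  rw [outgoingPhi, phiB_of_le hB, phiB_of_le ((div_le_one hp).2 hBp)]
  field_simp
  ring

lemma outgoingPhi_self (hp : 1 < p) : outgoingPhi γ p p = shockPart γ p := by
  rw [outgoingPhi, div_self (by linarith), phiB_one, mul_zero, add_zero, phiB_of_one_lt hp]

lemma exists_outgoingPhi_eq (hγ : 1 < γ) (hp : 0 < p) {R : ℝ} (hR : kappa γ * (p - 1) ≤ R) :
    ∃ B, 0 < B ∧ outgoingPhi γ p B = R := by
  have hκ := kappa_pos hγ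
  have hRκ : p - 1 ≤ R / kappa γ := (le_div_iff₀' hκ).2 hR
  set lo := min 1 p / 2
  set hi := (R / kappa γ + 1 + p) / 2
  have hlo : 0 < lo := half_pos (lt_min one_pos hp)
  have hhi : 0 < hi := by simp only [hi]; linarith
  have hGlo : outgoingPhi γ p lo ≤ R := by
    rw [outgoingPhi_of_le hp (by simp only [lo]; linarith [min_le_left 1 p])
      (by simp only [lo]; linarith [min_le_right 1 p])]
    refine le_trans ?_ hR
    have : lo ≤ p / 2 := by simp only [lo]; linarith [min_le_right 1 p]
    exact mul_le_mul_of_nonneg_left (by linarith) hκ.le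
  have hGhi : R ≤ outgoingPhi γ p hi := by
    refine le_of_eq_of_le ?_ (kappa_mul_le_outgoingPhi hγ hp hi)
    simp only [hi]
    field_simp
    ring
  obtain ⟨B, hB, hGB⟩ := intermediate_value_uIcc (continuous_outgoingPhi hγ p).continuousOn
    (mem_uIcc.2 (Or.inl ⟨hGlo, hGhi⟩))
  exact ⟨B, (lt_min hlo hhi).trans_le hB.1, hGB⟩

end

/-- the overtaking-interaction equation is uniquely solvable for all
    x, y > 0; and for two overtaking backward shocks (x, y > 1) the outgoing
    backward wave is a shock and the outgoing forward wave a rarefaction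
    (1 < B < xy). -/
theorem overtaking_solvable_SS (γ : ℝ) (hγ : 1 < γ) :
    (∀ x y : ℝ, 0 < x → 0 < y →
      ∃! B : ℝ, 0 < B ∧
        phiB γ B + x * y * phiB γ (B / (x * y)) = phiB γ x + x * phiB γ y) ∧
    (∀ x y B : ℝ, 1 < x → 1 < y → 0 < B →
      phiB γ B + x * y * phiB γ (B / (x * y)) = phiB γ x + x * phiB γ y →
      1 < B ∧ B < x * y) := by
  refine ⟨fun x y hx hy => ?_, fun x y B hx hy _ hB => ?_⟩
  · have hxy := mul_pos hx hy
    have hR : kappa γ * (x * y - 1) ≤ phiB γ x + x * phiB γ y := by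
      nlinarith [kappa_mul_le_phiB hγ x, kappa_mul_le_phiB hγ y]
    obtain ⟨B, hB, hGB⟩ := exists_outgoingPhi_eq hγ hxy hR
    exact ⟨B, ⟨hB, hGB⟩, fun B' hB' =>
      (strictMono_outgoingPhi hγ hxy).injective (hB'.2.trans hGB.symm)⟩
  · have hxy : 1 < x * y := one_lt_mul_of_lt_of_le hx hy.le
    have hG := strictMono_outgoingPhi hγ (zero_lt_one.trans hxy)
    change outgoingPhi γ (x * y) B = _ at hB
    rw [phiB_of_one_lt hx, phiB_of_one_lt hy] at hB
    constructor
    · rw [← hG.lt_iff_lt, hB, outgoingPhi_of_le (zero_lt_one.trans hxy) le_rfl hxy.le]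
      nlinarith [kappa_pos hγ, shockPart_nonneg γ x, shockPart_nonneg γ y]
    · rw [← hG.lt_iff_lt, hB, outgoingPhi_self hxy]
      exact (strictConvexOn_shockPart hγ).add_mul_lt_apply_mul (shockPart_one γ) hx hy
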